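/- Let G be a partial cube with Θ-classes E_1, ..., E_d. For each i, let U_i, U_i' be the two components of G - E_i; for i ≠ j and k,l ∈ {0,1} let m_ij^{kl} be the number of edges in the intersection of the corresponding components (m^{11} = |E(U_i) ∩ E(U_j)|, etc.). Then the edge-hyper-Wiener index satisfies WW_e(G) = 2 W_e(G) + Σ_{1 ≤ i < j ≤ d} ( m_ij^{11} m_ij^{00} + m_ij^{10} m_ij^{01} ) − C(|E(G)|, 2). -/

import Mathlib

open SimpleGraph
open scoped Classical

/-- The hypercube graph `Q_n`: vertices are 0-1 `n`-tuples, adjacent iff they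
differ in exactly one coordinate. -/
def cubeGraph (n : ℕ) : SimpleGraph (Fin n → Bool) where
  Adj x y := ∃! i, x i ≠ y i
  symm := by
    constructor
    rintro x y ⟨i, hi, hu⟩
    exact ⟨i, Ne.symm hi, fun j hj => hu j (Ne.symm hj)⟩
  loopless := by
    constructor
    rintro x ⟨i, hi, -⟩
    exact hi rfl

/-- A partial cube: a connected graph isometrically embeddable into some hypercube. -/
def IsPartialCube {V : Type*} (G : SimpleGraph V) : Prop :=
  G.Connected ∧ ∃ (n : ℕ) (φ : V → (Fin n → Bool)),
    ∀ u v : V, (cubeGraph n).dist (φ u) (φ v) = G.dist u v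

/-- The Djoković–Winkler relation `Θ`. -/
def theta {V : Type*} (G : SimpleGraph V) (e f : Sym2 V) : Prop :=
  ∃ u₁ v₁ u₂ v₂ : V, e = s(u₁, v₁) ∧ f = s(u₂, v₂) ∧
    G.dist u₁ u₂ + G.dist v₁ v₂ ≠ G.dist u₁ v₂ + G.dist v₁ u₂

/-- The edges of `G` having all endpoints inside the vertex set `s`. -/
def edgesWithin {V : Type*} (G : SimpleGraph V) (s : Set V) : Set (Sym2 V) :=
  {e ∈ G.edgeSet | ∀ x ∈ e, x ∈ s}

/-!
Embed `G` isometrically into a hypercube. Each Θ-class consists of the edges flipping one fixed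
coordinate and `U i` is a level set of that coordinate, so `d(u, v)` is the number of `i` for
which `U i` separates `u` from `v`. For distinct edges this gives `d_L(e, f) = 1 + s(e, f)`, where
`s(e, f) = ∑ χᵢ(e, f)` counts the `i` for which `U i` separates `e` from `f`. As the `χᵢ` are
`0/1`-valued, `d_L² - 3 d_L = s² - s - 2 = 2 ∑_{i<j} χᵢ χⱼ - 2` off the diagonal, and
`∑_{e,f} χᵢ χⱼ` counts the ordered pairs of edges lying in opposite quadrants of `U i, U j`,
which is `2 (m¹¹ m⁰⁰ + m¹⁰ m⁰¹)`.
-/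

open Finset

lemma sq_sum_eq_sum_sq_add_two_mul_sum_lt {R ι : Type*} [CommSemiring R] [Fintype ι]
    [LinearOrder ι] (x : ι → R) :
    (∑ i, x i) ^ 2 = ∑ i, x i ^ 2 + 2 * ∑ i, ∑ j, if i < j then x i * x j else 0 := by
  set A : ι → ι → R := fun i j => if i < j then x i * x j else 0
  have hsplit : ∀ i j, x i * x j = A i j + (if i = j then x i ^ 2 else 0) + A j i := by
    intro i j
    rcases lt_trichotomy i j with h | rfl | h
    · simp [A, h, h.ne, h.not_gt]
    · simp [A, sq]
    · simp [A, h, h.ne', h.not_gt, mul_comm]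
  calc (∑ i, x i) ^ 2 = ∑ i, ∑ j, (A i j + (if i = j then x i ^ 2 else 0) + A j i) := by
        rw [sq, Fintype.sum_mul_sum]
        exact Fintype.sum_congr _ _ fun i => Fintype.sum_congr _ _ fun j => hsplit i j
    _ = _ := by
        simp only [Finset.sum_add_distrib, Finset.sum_ite_eq, Finset.mem_univ, if_true]
        rw [Finset.sum_comm (f := fun i j => A j i)]
        ring

lemma sum_sum_sum_sum_comm {α β M : Type*} [Fintype α] [Fintype β] [AddCommMonoid M]
    (F : α → α → β → β → M) :
    ∑ a, ∑ a', ∑ b, ∑ b', F a a' b b' = ∑ b, ∑ b', ∑ a, ∑ a', F a a' b b' :=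
  calc _ = ∑ a, ∑ b, ∑ a', ∑ b', F a a' b b' :=
        Fintype.sum_congr _ _ fun _ => Finset.sum_comm
    _ = ∑ b, ∑ a, ∑ a', ∑ b', F a a' b b' := Finset.sum_comm
    _ = ∑ b, ∑ a, ∑ b', ∑ a', F a a' b b' :=
      Fintype.sum_congr _ _ fun _ => Fintype.sum_congr _ _ fun _ => Finset.sum_comm
    _ = _ := Fintype.sum_congr _ _ fun _ => Finset.sum_comm

namespace SimpleGraph

variable {V : Type*} {G : SimpleGraph V}

lemma exists_lineGraph_walk_length_le {x y : V} (w : G.Walk x y) (e f : G.edgeSet)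
    (hx : x ∈ (e : Sym2 V)) (hy : y ∈ (f : Sym2 V)) :
    ∃ q : G.lineGraph.Walk e f, q.length ≤ w.length + 1 := by
  induction w generalizing e with
  | nil =>
    by_cases hef : e = f
    · exact ⟨hef ▸ Walk.nil, by subst hef; simp⟩
    · exact ⟨Walk.cons (lineGraph_adj_iff_exists.2 ⟨hef, _, hx, hy⟩) Walk.nil, by simp⟩
  | @cons x z y hxz w ih =>
    obtain ⟨q, hq⟩ := ih ⟨s(x, z), hxz⟩ (Sym2.mem_mk_right x z) hy
    by_cases he : e = ⟨s(x, z), hxz⟩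
    · exact ⟨he ▸ q, by subst he; simp only [Walk.length_cons]; omega⟩
    · have hadj : G.lineGraph.Adj e ⟨s(x, z), hxz⟩ :=
        lineGraph_adj_iff_exists.2 ⟨he, x, hx, Sym2.mem_mk_left x z⟩
      exact ⟨Walk.cons hadj q, by simp only [Walk.length_cons]; omega⟩

lemma dist_le_one_of_mem_edge {e : G.edgeSet} {x y : V}
    (hx : x ∈ (e : Sym2 V)) (hy : y ∈ (e : Sym2 V)) : G.dist x y ≤ 1 := by
  rcases eq_or_ne x y with rfl | hxy
  · simp
  · have hadj : G.Adj x y := by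
      rw [← mem_edgeSet, ← (Sym2.mem_and_mem_iff hxy).1 ⟨hx, hy⟩]
      exact e.2
    rw [dist_eq_one_iff_adj.2 hadj]

lemma Connected.exists_dist_lt_length_of_lineGraph_walk (hconn : G.Connected)
    {e f : G.edgeSet} (q : G.lineGraph.Walk e f) (hef : e ≠ f) :
    ∃ x ∈ (e : Sym2 V), ∃ y ∈ (f : Sym2 V), G.dist x y < q.length := by
  induction q with
  | nil => exact absurd rfl hef
  | @cons e g f hadj q ih =>
    obtain ⟨-, x, hxe, hxg⟩ := lineGraph_adj_iff_exists.1 hadj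
    by_cases hgf : g = f
    · subst hgf
      exact ⟨x, hxe, x, hxg, by simp⟩
    · obtain ⟨z, hzg, y, hyf, hzy⟩ := ih hgf
      have := dist_le_one_of_mem_edge hxg hzg
      have := hconn.dist_triangle (u := x) (v := z) (w := y)
      exact ⟨x, hxe, y, hyf, by simp only [Walk.length_cons]; omega⟩

lemma Connected.lineGraph_dist_le (hconn : G.Connected) (e f : G.edgeSet) {x y : V}
    (hx : x ∈ (e : Sym2 V)) (hy : y ∈ (f : Sym2 V)) :
    G.lineGraph.dist e f ≤ G.dist x y + 1 := by
  obtain ⟨w, hw⟩ := hconn.exists_walk_length_eq_dist x y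
  obtain ⟨q, hq⟩ := exists_lineGraph_walk_length_le w e f hx hy
  exact (dist_le q).trans (hw ▸ hq)

lemma Connected.exists_dist_lt_lineGraph_dist (hconn : G.Connected) {e f : G.edgeSet}
    (hef : e ≠ f) :
    ∃ x ∈ (e : Sym2 V), ∃ y ∈ (f : Sym2 V), G.dist x y < G.lineGraph.dist e f := by
  have hx := Sym2.out_fst_mem (e : Sym2 V)
  have hy := Sym2.out_fst_mem (f : Sym2 V)
  obtain ⟨w⟩ := hconn.preconnected _ _
  obtain ⟨q, -⟩ := exists_lineGraph_walk_length_le w e f hx hy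
  obtain ⟨q, hq⟩ := Reachable.exists_walk_length_eq_dist ⟨q⟩
  exact hq ▸ hconn.exists_dist_lt_length_of_lineGraph_walk q hef

lemma Reachable.apply_eq_of_forall_adj {α : Type*} {u v : V}
    (h : G.Reachable u v) {f : V → α} (hf : ∀ x y, G.Adj x y → f x = f y) : f u = f v := by
  obtain ⟨w⟩ := h
  induction w with
  | nil => rfl
  | cons hxy _ ih => exact (hf _ _ hxy).trans ih

end SimpleGraph

section Hypercube

variable {n : ℕ}

lemma cubeGraph_adj_iff {x y : Fin n → Bool} : (cubeGraph n).Adj x y ↔ hammingDist x y = 1 := by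
  simp [cubeGraph, hammingDist, card_eq_one, ExistsUnique, eq_singleton_iff_unique_mem]

lemma hammingDist_le_length (x y : Fin n → Bool) (w : (cubeGraph n).Walk x y) :
    hammingDist x y ≤ w.length := by
  induction w with
  | nil => simp
  | @cons x z y hxz w ih =>
    have := hammingDist_triangle x z y
    rw [cubeGraph_adj_iff.1 hxz] at this
    simp only [Walk.length_cons]
    omega

lemma exists_cubeGraph_walk_length_le (x y : Fin n → Bool) :
    ∃ w : (cubeGraph n).Walk x y, w.length ≤ hammingDist x y := by
  induction h : hammingDist x y using Nat.strong_induction_on generalizing x with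
  | _ k ih =>
    by_cases hxy : x = y
    · subst hxy
      exact ⟨Walk.nil, Nat.zero_le _⟩
    obtain ⟨i, hi⟩ := Function.ne_iff.1 hxy
    set x' := Function.update x i (y i)
    have hsub : univ.filter (fun j => x' j ≠ y j) ⊂ univ.filter (fun j => x j ≠ y j) := by
      refine (Finset.ssubset_iff_of_subset fun j => ?_).2 ⟨i, by simpa using hi, by simp [x']⟩
      by_cases hj : j = i <;> simp [x', hj]
    have hlt : hammingDist x' y < k := h ▸ card_lt_card hsub
    have hadj : (cubeGraph n).Adj x x' := by
      refine ⟨i, by simpa [x'] using hi, fun j hj => ?_⟩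
      by_contra hji
      simp [x', hji] at hj
    obtain ⟨w, hw⟩ := ih _ hlt x' rfl
    exact ⟨Walk.cons hadj w, by simp only [Walk.length_cons]; omega⟩

lemma cubeGraph_dist (x y : Fin n → Bool) : (cubeGraph n).dist x y = hammingDist x y := by
  obtain ⟨w, hw⟩ := exists_cubeGraph_walk_length_le x y
  obtain ⟨w', hw'⟩ := Reachable.exists_walk_length_eq_dist ⟨w⟩
  have := hammingDist_le_length x y w'
  have := dist_le w
  omega

lemma hammingDist_add_ne_iff {ι : Type*} [Fintype ι] {a b c d : ι → Bool}
    (hab : ∃! q, a q ≠ b q) :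
    hammingDist a c + hammingDist b d ≠ hammingDist a d + hammingDist b c ↔
      ∃ q, a q ≠ b q ∧ c q ≠ d q := by
  obtain ⟨q₀, hq₀, hq₀_uniq⟩ := hab
  let D : Bool → Bool → Bool → Bool → ℤ := fun a b c d =>
    (if a ≠ c then 1 else 0) + (if b ≠ d then 1 else 0) - (if a ≠ d then 1 else 0) -
      (if b ≠ c then 1 else 0)
  have hD_eq : ∀ x c d, D x x c d = 0 := by decide
  have hD_ne : ∀ x y c d, x ≠ y → (D x y c d ≠ 0 ↔ c ≠ d) := by decide
  have hcast : ∀ x y : ι → Bool,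
      (hammingDist x y : ℤ) = ∑ q, if x q ≠ y q then 1 else 0 := by
    simp only [hammingDist, Finset.card_filter, Nat.cast_sum, Nat.cast_ite, Nat.cast_one,
      Nat.cast_zero, implies_true]
  have hsum : (hammingDist a c + hammingDist b d : ℤ) - (hammingDist a d + hammingDist b c) =
      D (a q₀) (b q₀) (c q₀) (d q₀) := by
    calc _ = ∑ q, D (a q) (b q) (c q) (d q) := by
          simp only [hcast, D, ← Finset.sum_add_distrib, ← Finset.sum_sub_distrib,
            sub_add_eq_sub_sub]
      _ = _ := Finset.sum_eq_single q₀
          (fun q _ hq => by rw [not_not.1 (mt (hq₀_uniq q) hq), hD_eq])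
          fun h => absurd (mem_univ q₀) h
  have hcut : (∃ q, a q ≠ b q ∧ c q ≠ d q) ↔ c q₀ ≠ d q₀ :=
    ⟨fun ⟨q, hq, hcd⟩ => hq₀_uniq q hq ▸ hcd, fun h => ⟨q₀, hq₀, h⟩⟩
  rw [hcut, ← hD_ne _ _ _ _ hq₀, ← hsum]
  omega

end Hypercube

section Separation

variable {V : Type*} {G : SimpleGraph V}

def SeparatedBy (s : Set V) (e f : Sym2 V) : Prop :=
  ∀ x ∈ e, ∀ y ∈ f, ¬(x ∈ s ↔ y ∈ s)

lemma edgesWithin_inter (s t : Set V) :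
    edgesWithin G (s ∩ t) = edgesWithin G s ∩ edgesWithin G t := by
  ext e
  simp only [edgesWithin, Set.mem_ofPred_eq, Set.mem_inter_iff]
  grind

lemma separatedBy_iff {s : Set V} {e f : Sym2 V} (he : e ∈ G.edgeSet) (hf : f ∈ G.edgeSet) :
    SeparatedBy s e f ↔ (e ∈ edgesWithin G s ∧ f ∈ edgesWithin G sᶜ) ∨
      (e ∈ edgesWithin G sᶜ ∧ f ∈ edgesWithin G s) := by
  simp only [edgesWithin, Set.mem_ofPred_eq, he, hf, true_and, Set.mem_compl_iff, SeparatedBy]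
  have hx₀ := Sym2.out_fst_mem e
  have hy₀ := Sym2.out_fst_mem f
  constructor
  · intro h
    by_cases hs : e.out.1 ∈ s
    · refine Or.inl ⟨fun x hx => ?_, fun y hy => ?_⟩
      · have := h x hx _ hy₀; have := h _ hx₀ _ hy₀; tauto
      · have := h _ hx₀ y hy; tauto
    · refine Or.inr ⟨fun x hx => ?_, fun y hy => ?_⟩
      · have := h x hx _ hy₀; have := h _ hx₀ _ hy₀; tauto
      · have := h _ hx₀ y hy; tauto
  · rintro (⟨h₁, h₂⟩ | ⟨h₁, h₂⟩) x hx y hy <;>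
      have := h₁ x hx <;> have := h₂ y hy <;> tauto

lemma notMem_edgesWithin_compl {s : Set V} {e : Sym2 V} (he : e ∈ edgesWithin G s) :
    e ∉ edgesWithin G sᶜ :=
  fun he' => he'.2 _ (Sym2.out_fst_mem e) (he.2 _ (Sym2.out_fst_mem e))

lemma ite_separatedBy {s : Set V} {e f : Sym2 V} (he : e ∈ G.edgeSet) (hf : f ∈ G.edgeSet) :
    (if SeparatedBy s e f then 1 else 0 : ℚ) =
      (if e ∈ edgesWithin G s then 1 else 0) * (if f ∈ edgesWithin G sᶜ then 1 else 0) +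
      (if e ∈ edgesWithin G sᶜ then 1 else 0) * (if f ∈ edgesWithin G s then 1 else 0) := by
  rw [separatedBy_iff he hf]
  by_cases h₁ : e ∈ edgesWithin G s
  · simp [h₁, notMem_edgesWithin_compl h₁]
  · by_cases h₂ : f ∈ edgesWithin G s
    · simp [h₁, h₂, notMem_edgesWithin_compl h₂]
    · simp [h₁, h₂]

lemma ncard_edgesWithin_eq_sum [Fintype V] (s : Set V) :
    ((edgesWithin G s).ncard : ℚ) =
      ∑ e : G.edgeSet, if (e : Sym2 V) ∈ edgesWithin G s then 1 else 0 := by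
  rw [Finset.sum_boole, ← Set.ncard_preimage_of_injective_subset_range Subtype.val_injective
    (fun e he => ⟨⟨e, he.1⟩, rfl⟩), ← Set.ncard_coe_finset]
  congr 2
  ext
  simp

lemma sum_sum_separatedBy_mul_separatedBy [Fintype V] (s t : Set V) :
    ∑ e : G.edgeSet, ∑ f : G.edgeSet,
      (if SeparatedBy s e f then 1 else 0 : ℚ) * (if SeparatedBy t e f then 1 else 0) =
    2 * ((edgesWithin G (s ∩ t)).ncard * (edgesWithin G (sᶜ ∩ tᶜ)).ncard +
      (edgesWithin G (s ∩ tᶜ)).ncard * (edgesWithin G (sᶜ ∩ t)).ncard : ℚ) := by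
  set I : Set V → G.edgeSet → ℚ := fun a e =>
    if (e : Sym2 V) ∈ edgesWithin G a then 1 else 0
  have hI : ∀ a b e, I (a ∩ b) e = I a e * I b e := fun a b e => by
    simp only [I, edgesWithin_inter, Set.mem_inter_iff, ite_zero_mul_ite_zero, mul_one]
  have hpt : ∀ e f : G.edgeSet,
      (if SeparatedBy s e f then 1 else 0 : ℚ) * (if SeparatedBy t e f then 1 else 0) =
        I (s ∩ t) e * I (sᶜ ∩ tᶜ) f + I (sᶜ ∩ tᶜ) e * I (s ∩ t) f +
        (I (s ∩ tᶜ) e * I (sᶜ ∩ t) f + I (sᶜ ∩ t) e * I (s ∩ tᶜ) f) := fun e f => by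
    simp only [ite_separatedBy e.2 f.2, hI]
    ring
  simp only [hpt, ncard_edgesWithin_eq_sum, Finset.sum_add_distrib, ← Fintype.sum_mul_sum]
  ring

end Separation

section EdgeHyperWiener

variable {V : Type*} {G : SimpleGraph V} {ι : Type*} [Fintype ι] {U : ι → Set V}

lemma exists_sole_crossing_index (hdist : ∀ u v, G.dist u v = #{i | ¬(u ∈ U i ↔ v ∈ U i)})
    {e : Sym2 V} (he : e ∈ G.edgeSet) :
    ∃ i, (∀ z, ∃ x ∈ e, x ∈ U i ↔ z ∈ U i) ∧
      ∀ k ≠ i, ∀ x ∈ e, ∀ y ∈ e, (x ∈ U k ↔ y ∈ U k) := by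
  induction e using Sym2.ind with | _ u v => ?_
  obtain ⟨i, hi⟩ := card_eq_one.1 ((hdist u v).symm.trans (dist_eq_one_iff_adj.2 he))
  have hcross : ∀ k, ¬(u ∈ U k ↔ v ∈ U k) ↔ k = i := by
    simpa using Finset.ext_iff.1 hi
  refine ⟨i, fun z => ?_, fun k hk x hx y hy => ?_⟩
  · by_cases hu : u ∈ U i ↔ z ∈ U i
    · exact ⟨u, Sym2.mem_mk_left u v, hu⟩
    · exact ⟨v, Sym2.mem_mk_right u v, by have := (hcross i).2 rfl; tauto⟩
  · have := mt (hcross k).1 hk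
    rcases Sym2.mem_iff.1 hx with rfl | rfl <;> rcases Sym2.mem_iff.1 hy with rfl | rfl <;> tauto

lemma card_separatedBy_le_dist (hdist : ∀ u v, G.dist u v = #{i | ¬(u ∈ U i ↔ v ∈ U i)})
    {e f : Sym2 V} {x y : V} (hx : x ∈ e) (hy : y ∈ f) :
    #{i | SeparatedBy (U i) e f} ≤ G.dist x y := by
  rw [hdist]
  exact card_le_card fun i hi => by
    simp only [mem_filter, mem_univ, true_and] at hi ⊢
    exact hi x hx y hy

lemma exists_dist_le_card_separatedBy
    (hdist : ∀ u v, G.dist u v = #{i | ¬(u ∈ U i ↔ v ∈ U i)})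
    {e f : Sym2 V} (he : e ∈ G.edgeSet) (hf : f ∈ G.edgeSet) :
    ∃ x ∈ e, ∃ y ∈ f, G.dist x y ≤ #{i | SeparatedBy (U i) e f} := by
  obtain ⟨ie, he_cross, he_const⟩ := exists_sole_crossing_index hdist he
  obtain ⟨jf, hf_cross, hf_const⟩ := exists_sole_crossing_index hdist hf
  have hy₀ := Sym2.out_fst_mem f
  -- With `x` on the side of `U ie` containing `f` and `y` on the side of `U jf` containing `x`,
  -- only the classes separating `e` from `f` separate `x` from `y`.
  obtain ⟨x, hx, hxy₀⟩ := he_cross f.out.1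
  obtain ⟨y, hy, hyx⟩ := hf_cross x
  refine ⟨x, hx, y, hy, ?_⟩
  rw [hdist]
  refine card_le_card fun i hi => ?_
  simp only [mem_filter, mem_univ, true_and] at hi ⊢
  have hi_jf : i ≠ jf := by rintro rfl; tauto
  have hi_ie : i ≠ ie := by
    rintro rfl
    have := hf_const i hi_jf y hy _ hy₀
    tauto
  intro x' hx' y' hy'
  have := he_const i hi_ie x' hx' x hx
  have := hf_const i hi_jf y' hy' y hy
  tauto

lemma lineGraph_dist_eq_card_separatedBy_add_one (hconn : G.Connected)
    (hdist : ∀ u v, G.dist u v = #{i | ¬(u ∈ U i ↔ v ∈ U i)}) {e f : G.edgeSet}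
    (hef : e ≠ f) : G.lineGraph.dist e f = #{i | SeparatedBy (U i) e f} + 1 := by
  obtain ⟨x, hx, y, hy, hxy⟩ := exists_dist_le_card_separatedBy hdist e.2 f.2
  obtain ⟨x', hx', y', hy', hxy'⟩ := hconn.exists_dist_lt_lineGraph_dist hef
  have := hconn.lineGraph_dist_le e f hx hy
  have := card_separatedBy_le_dist hdist hx' hy'
  omega

lemma lineGraph_dist_sq_sub_three_mul [LinearOrder ι] (hconn : G.Connected)
    (hdist : ∀ u v, G.dist u v = #{i | ¬(u ∈ U i ↔ v ∈ U i)}) (e f : G.edgeSet) :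
    (G.lineGraph.dist e f : ℚ) ^ 2 - 3 * G.lineGraph.dist e f =
      2 * (∑ i, ∑ j, if i < j then
          (if SeparatedBy (U i) e f then 1 else 0) * (if SeparatedBy (U j) e f then 1 else 0)
        else 0) +
      2 * (if e = f then 1 else 0) - 2 := by
  by_cases hef : e = f
  · have hsep : ∀ i, ¬SeparatedBy (U i) e e := fun i h =>
      h _ (Sym2.out_fst_mem _) _ (Sym2.out_fst_mem _) Iff.rfl
    subst hef
    simp [hsep]
  · have hsq := sq_sum_eq_sum_sq_add_two_mul_sum_lt
      (fun i => (if SeparatedBy (U i) e f then 1 else 0 : ℚ))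
    simp only [ite_pow, one_pow, zero_pow two_ne_zero, Finset.sum_boole] at hsq
    rw [lineGraph_dist_eq_card_separatedBy_add_one hconn hdist hef, if_neg hef]
    push_cast
    linear_combination hsq

theorem edgeHyperWiener_eq_of_dist_eq_card [Fintype V] [LinearOrder ι] (hconn : G.Connected)
    (hdist : ∀ u v, G.dist u v = #{i | ¬(u ∈ U i ↔ v ∈ U i)}) :
    (1 / 4 : ℚ) * (∑ e : G.edgeSet, ∑ f : G.edgeSet, (G.lineGraph.dist e f : ℚ)) +
      (1 / 4 : ℚ) * (∑ e : G.edgeSet, ∑ f : G.edgeSet, (G.lineGraph.dist e f : ℚ) ^ 2) =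
    2 * ((1 / 2 : ℚ) * ∑ e : G.edgeSet, ∑ f : G.edgeSet, (G.lineGraph.dist e f : ℚ)) +
      (∑ i, ∑ j, if i < j then
          ((edgesWithin G (U i ∩ U j)).ncard * (edgesWithin G ((U i)ᶜ ∩ (U j)ᶜ)).ncard +
            (edgesWithin G (U i ∩ (U j)ᶜ)).ncard * (edgesWithin G ((U i)ᶜ ∩ U j)).ncard : ℚ)
        else 0) -
      (Nat.choose (Fintype.card G.edgeSet) 2 : ℚ) := by
  have hsum : ∑ e : G.edgeSet, ∑ f : G.edgeSet, (G.lineGraph.dist e f : ℚ) ^ 2 -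
      3 * ∑ e : G.edgeSet, ∑ f : G.edgeSet, (G.lineGraph.dist e f : ℚ) =
      4 * (∑ i, ∑ j, if i < j then
          ((edgesWithin G (U i ∩ U j)).ncard * (edgesWithin G ((U i)ᶜ ∩ (U j)ᶜ)).ncard +
            (edgesWithin G (U i ∩ (U j)ᶜ)).ncard * (edgesWithin G ((U i)ᶜ ∩ U j)).ncard : ℚ)
        else 0) + 2 * Fintype.card G.edgeSet - 2 * Fintype.card G.edgeSet ^ 2 := by
    simp only [Finset.mul_sum, ← Finset.sum_sub_distrib,
      lineGraph_dist_sq_sub_three_mul hconn hdist]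
    simp only [Finset.sum_sub_distrib, Finset.sum_add_distrib, ← Finset.mul_sum,
      sum_sum_sum_sum_comm, Finset.sum_ite_irrel, Finset.sum_const_zero,
      sum_sum_separatedBy_mul_separatedBy]
    simp only [← mul_ite_zero, ← Finset.mul_sum, Finset.sum_ite_eq, Finset.mem_univ, if_true,
      Finset.sum_const, Finset.card_univ, nsmul_eq_mul]
    ring
  rw [Nat.cast_choose_two]
  linear_combination hsum / 4

end EdgeHyperWiener

section PartialCube

variable {V : Type*} {G : SimpleGraph V} {n : ℕ} {φ : V → Fin n → Bool}

def IsCutAt (φ : V → Fin n → Bool) (q : Fin n) : Sym2 V → Prop :=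
  Sym2.lift ⟨fun x y => φ x q ≠ φ y q, fun _ _ => propext ne_comm⟩

lemma existsUnique_isCutAt (hφ : ∀ u v, hammingDist (φ u) (φ v) = G.dist u v)
    {e : Sym2 V} (he : e ∈ G.edgeSet) : ∃! q, IsCutAt φ q e := by
  induction e using Sym2.ind with
  | _ u v => exact cubeGraph_adj_iff.2 ((hφ u v).trans (dist_eq_one_iff_adj.2 he))

lemma theta_iff_exists_isCutAt (hφ : ∀ u v, hammingDist (φ u) (φ v) = G.dist u v)
    {e f : Sym2 V} (he : e ∈ G.edgeSet) (hf : f ∈ G.edgeSet) :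
    theta G e f ↔ ∃ q, IsCutAt φ q e ∧ IsCutAt φ q f := by
  constructor
  · rintro ⟨a, b, c, d, rfl, rfl, h⟩
    simp only [← hφ] at h
    exact (hammingDist_add_ne_iff (existsUnique_isCutAt hφ he)).1 h
  · induction e using Sym2.ind with | _ a b => ?_
    induction f using Sym2.ind with | _ c d => ?_
    intro h
    refine ⟨a, b, c, d, rfl, rfl, ?_⟩
    simp only [← hφ]
    exact (hammingDist_add_ne_iff (existsUnique_isCutAt hφ he)).2 h

variable {d : ℕ} {Ecl : Fin d → Set (Sym2 V)}

lemma exists_coord_mem_iff_isCutAt (hφ : ∀ u v, hammingDist (φ u) (φ v) = G.dist u v)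
    (hsub : ∀ i, Ecl i ⊆ G.edgeSet) (hne : ∀ i, (Ecl i).Nonempty)
    (hcl : ∀ i, ∀ e ∈ Ecl i, ∀ f ∈ G.edgeSet, (f ∈ Ecl i ↔ theta G e f)) :
    ∃ p : Fin d → Fin n, ∀ i, ∀ g ∈ G.edgeSet, g ∈ Ecl i ↔ IsCutAt φ (p i) g := by
  choose e he using hne
  have hcut i := existsUnique_isCutAt hφ (hsub i (he i))
  choose p hp using fun i => (hcut i).exists
  refine ⟨p, fun i g hg => ?_⟩
  rw [hcl i _ (he i) g hg, theta_iff_exists_isCutAt hφ (hsub i (he i)) hg]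
  exact ⟨fun ⟨q, hq, hqg⟩ => (hcut i).unique hq (hp i) ▸ hqg, fun h => ⟨p i, hp i, h⟩⟩

variable {p : Fin d → Fin n}

lemma injective_of_mem_iff_isCutAt (hsub : ∀ i, Ecl i ⊆ G.edgeSet)
    (hne : ∀ i, (Ecl i).Nonempty) (hpart : ∀ e ∈ G.edgeSet, ∃! i, e ∈ Ecl i)
    (hp : ∀ i, ∀ g ∈ G.edgeSet, g ∈ Ecl i ↔ IsCutAt φ (p i) g) :
    Function.Injective p := by
  intro i j hij
  obtain ⟨e, he⟩ := hne j
  have hei : e ∈ Ecl i := (hp i e (hsub j he)).2 (hij ▸ (hp j e (hsub j he)).1 he)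
  exact (hpart e (hsub j he)).unique hei he

lemma mem_range_of_apply_ne (hconn : G.Connected)
    (hφ : ∀ u v, hammingDist (φ u) (φ v) = G.dist u v)
    (hpart : ∀ e ∈ G.edgeSet, ∃! i, e ∈ Ecl i)
    (hp : ∀ i, ∀ g ∈ G.edgeSet, g ∈ Ecl i ↔ IsCutAt φ (p i) g)
    {u v : V} {q : Fin n} (h : φ u q ≠ φ v q) : q ∈ Set.range p := by
  by_contra hq
  refine h ((hconn u v).apply_eq_of_forall_adj (f := (φ · q)) fun x y hxy => ?_)
  by_contra hcut
  obtain ⟨i, hi, -⟩ := hpart s(x, y) hxy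
  have hcut_uniq := existsUnique_isCutAt (e := s(x, y)) hφ hxy
  exact hq ⟨i, (hcut_uniq.unique hcut ((hp i _ hxy).1 hi)).symm⟩

lemma mem_iff_mem_iff_coord_eq (hsub : ∀ i, Ecl i ⊆ G.edgeSet) (hne : ∀ i, (Ecl i).Nonempty)
    (hp : ∀ i, ∀ g ∈ G.edgeSet, g ∈ Ecl i ↔ IsCutAt φ (p i) g) {U : Fin d → Set V}
    (hU : ∀ i, ∀ u v : V, (G.deleteEdges (Ecl i)).Reachable u v ↔ (u ∈ U i ↔ v ∈ U i))
    (i : Fin d) (u v : V) : (u ∈ U i ↔ v ∈ U i) ↔ φ u (p i) = φ v (p i) := by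
  have hsame : ∀ x y, (x ∈ U i ↔ y ∈ U i) → φ x (p i) = φ y (p i) := fun x y hxy =>
    ((hU i x y).2 hxy).apply_eq_of_forall_adj (f := (φ · (p i))) fun a b hab => by
      rw [deleteEdges_adj] at hab
      by_contra h
      exact hab.2 ((hp i _ hab.1).2 h)
  refine ⟨hsame u v, fun h => ?_⟩
  obtain ⟨e, he⟩ := hne i
  induction e using Sym2.ind with | _ a b => ?_
  have hab : φ a (p i) ≠ φ b (p i) := (hp i _ (hsub i he)).1 he
  have := mt (hsame a b) hab
  by_contra huv
  by_cases hua : u ∈ U i ↔ a ∈ U i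
  · exact hab ((hsame a u (by tauto)).trans (h.trans (hsame v b (by tauto))))
  · exact hab ((hsame a v (by tauto)).trans (h.symm.trans (hsame u b (by tauto))))

theorem dist_eq_card_separating_of_thetaClasses (hconn : G.Connected)
    (hφ : ∀ u v, hammingDist (φ u) (φ v) = G.dist u v)
    (hsub : ∀ i, Ecl i ⊆ G.edgeSet) (hne : ∀ i, (Ecl i).Nonempty)
    (hpart : ∀ e ∈ G.edgeSet, ∃! i, e ∈ Ecl i)
    (hcl : ∀ i, ∀ e ∈ Ecl i, ∀ f ∈ G.edgeSet, (f ∈ Ecl i ↔ theta G e f))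
    {U : Fin d → Set V}
    (hU : ∀ i, ∀ u v : V, (G.deleteEdges (Ecl i)).Reachable u v ↔ (u ∈ U i ↔ v ∈ U i))
    (u v : V) : G.dist u v = #{i | ¬(u ∈ U i ↔ v ∈ U i)} := by
  obtain ⟨p, hp⟩ := exists_coord_mem_iff_isCutAt hφ hsub hne hcl
  have hpinj := injective_of_mem_iff_isCutAt hsub hne hpart hp
  simp only [mem_iff_mem_iff_coord_eq hsub hne hp hU, ← hφ, hammingDist]
  rw [← card_map ⟨p, hpinj⟩]
  congr 1
  ext q
  simp only [mem_map, mem_filter, mem_univ, true_and, Function.Embedding.coeFn_mk]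
  refine ⟨fun h => ?_, fun ⟨i, hi, hiq⟩ => hiq ▸ hi⟩
  obtain ⟨i, rfl⟩ := mem_range_of_apply_ne hconn hφ hpart hp h
  exact ⟨i, h, rfl⟩

end PartialCube

theorem stmt11 {V : Type*} [Fintype V] (G : SimpleGraph V) (hPC : IsPartialCube G)
    (d : ℕ) (Ecl : Fin d → Set (Sym2 V))
    -- `Ecl` enumerates the Θ-classes of `G`:
    (hsub : ∀ i, Ecl i ⊆ G.edgeSet)
    (hne : ∀ i, (Ecl i).Nonempty)
    (hpart : ∀ e ∈ G.edgeSet, ∃! i, e ∈ Ecl i)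
    (hcl : ∀ i, ∀ e ∈ Ecl i, ∀ f ∈ G.edgeSet, (f ∈ Ecl i ↔ theta G e f))
    -- `U i` and its complement are the two components of `G - Ecl i`:
    (U : Fin d → Set V)
    (hU : ∀ i, ∀ u v : V,
      (G.deleteEdges (Ecl i)).Reachable u v ↔ (u ∈ U i ↔ v ∈ U i)) :
    (1 / 4 : ℚ) * (∑ e : G.edgeSet, ∑ f : G.edgeSet, (G.lineGraph.dist e f : ℚ)) +
      (1 / 4 : ℚ) * (∑ e : G.edgeSet, ∑ f : G.edgeSet, (G.lineGraph.dist e f : ℚ) ^ 2) =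
    2 * ((1 / 2 : ℚ) * ∑ e : G.edgeSet, ∑ f : G.edgeSet, (G.lineGraph.dist e f : ℚ)) +
      (∑ i : Fin d, ∑ j : Fin d, if i < j then
          ((edgesWithin G (U i ∩ U j)).ncard * (edgesWithin G ((U i)ᶜ ∩ (U j)ᶜ)).ncard +
            (edgesWithin G (U i ∩ (U j)ᶜ)).ncard * (edgesWithin G ((U i)ᶜ ∩ U j)).ncard : ℚ)
        else 0) -
      (Nat.choose (Fintype.card G.edgeSet) 2 : ℚ) := by
  obtain ⟨hconn, n, φ, hφ⟩ := hPC
  simp only [cubeGraph_dist] at hφ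
  exact edgeHyperWiener_eq_of_dist_eq_card hconn
    (dist_eq_card_separating_of_thetaClasses hconn hφ hsub hne hpart hcl hU)
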